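/- arXiv:math/9811154 — 2 statements merged into one kernel-verified Lean document; each statement's English description precedes it below -/
import Mathlib

section
/- For every integer n ≥ 2 and every real t > 0, the quantities U_n satisfy the discrete Painlevé II recurrence (n/t)·U_n(t) + (1 − U_n(t)²)·(U_{n−1}(t) + U_{n+1}(t)) = 0. -/
open MeasureTheory Matrix Filter

/-- The k-th Fourier coefficient of the symbol `f(e^{iθ}) = e^{2t cos θ}`. -/
noncomputable def fk (t : ℝ) (k : ℤ) : ℝ :=
  (1 / (2 * Real.pi)) *
    ∫ θ in (0:ℝ)..(2 * Real.pi), Real.exp (2 * t * Real.cos θ) * Real.cos ((k : ℝ) * θ)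

/-- The n×n Toeplitz matrix `T_n(t)` with (j,k) entry `f_{j-k}(t)`. -/
noncomputable def Tmat (n : ℕ) (t : ℝ) : Matrix (Fin n) (Fin n) ℝ :=
  fun j k => fk t ((j : ℤ) - (k : ℤ))

/-- The Toeplitz determinant `D_n(t)`. -/
noncomputable def Dn (n : ℕ) (t : ℝ) : ℝ := (Tmat n t).det

/-- δ⁺ = (1,0,…,0)ᵀ. -/
def deltaPlus (n : ℕ) : Fin n → ℝ := fun i => if (i : ℕ) = 0 then 1 else 0

/-- δ⁻ = (0,…,0,1)ᵀ. -/
def deltaMinus (n : ℕ) : Fin n → ℝ := fun i => if (i : ℕ) = n - 1 then 1 else 0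

/-- f⁺ = (f_1,…,f_n)ᵀ. -/
noncomputable def fplus (n : ℕ) (t : ℝ) : Fin n → ℝ := fun j => fk t ((j : ℤ) + 1)

/-- f⁻ = (f_n,…,f_1)ᵀ. -/
noncomputable def fminus (n : ℕ) (t : ℝ) : Fin n → ℝ := fun j => fk t ((n : ℤ) - (j : ℤ))

/-- U_n(t) = ⟨T_n(t)⁻¹ f⁺, δ⁻⟩. -/
noncomputable def Un (n : ℕ) (t : ℝ) : ℝ :=
  dotProduct ((Tmat n t)⁻¹ *ᵥ fplus n t) (deltaMinus n)

/-- V_n⁺(t) = ⟨T_n(t)⁻¹ δ⁺, δ⁺⟩. -/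
noncomputable def Vplus (n : ℕ) (t : ℝ) : ℝ :=
  dotProduct ((Tmat n t)⁻¹ *ᵥ deltaPlus n) (deltaPlus n)

/-- V_n⁻(t) = ⟨T_n(t)⁻¹ δ⁻, δ⁺⟩. -/
noncomputable def Vminus (n : ℕ) (t : ℝ) : ℝ :=
  dotProduct ((Tmat n t)⁻¹ *ᵥ deltaMinus n) (deltaPlus n)

/-!
`U_n = -Φ_n(0)`, where `Φ_n` is the monic orthogonal polynomial of degree `n` for the positive
weight `e^{2t cos θ}` on the unit circle; so `U_n` is a Verblunsky coefficient `α_n`. Szegő's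
recursion `Φ_{n+1} = z Φ_n - α_{n+1} Φ_n^*` gives `h_{n+1} = h_n (1 - α_{n+1}²)` for the norms
`h_n = ⟨Φ_n, z^n⟩`. The Fourier coefficients of the weight satisfy the Bessel recurrence
`k f_k = t (f_{k-1} - f_{k+1})`, which computes the pairings of `n Φ_n - z Φ_n'` with `z^k`. As a
polynomial of degree `< n` is determined by its pairings with `1, …, z^{n-1}`, this identifies
`n Φ_n - z Φ_n' = -t (1 - α_n²) Φ_{n-1} + t α_{n+1} (1 - α_n²) Φ_{n-1}^*` (Freud's equation), and
comparing constant terms gives the recurrence.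
-/

open Polynomial

theorem Polynomial.degree_lt_succ_of_natDegree_le {R : Type*} [Semiring R] {p : R[X]} {n : ℕ}
    (hp : p.natDegree ≤ n) : p.degree < ↑(n + 1) :=
  (degree_le_of_natDegree_le hp).trans_lt (WithBot.coe_lt_coe.mpr n.lt_succ_self)

theorem Polynomial.coeff_X_mul_derivative {R : Type*} [Semiring R] (p : R[X]) (j : ℕ) :
    (X * derivative p).coeff j = j * p.coeff j := by
  rcases j with _ | j
  · rw [coeff_X_mul_zero, Nat.cast_zero, zero_mul]
  · rw [coeff_X_mul, coeff_derivative, ← Nat.cast_succ, Nat.cast_comm]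

theorem Polynomial.degree_natDegree_smul_sub_X_mul_derivative_lt {R : Type*} [Ring R]
    (p : R[X]) : ((p.natDegree : R) • p - X * derivative p).degree < (p.natDegree : WithBot ℕ) := by
  refine (degree_lt_iff_coeff_zero _ _).mpr fun j hj => ?_
  rw [coeff_sub, coeff_smul, coeff_X_mul_derivative, smul_eq_mul, ← sub_mul]
  rcases hj.eq_or_lt with rfl | hj
  · rw [sub_self, zero_mul]
  · rw [coeff_eq_zero_of_natDegree_lt hj, mul_zero]

def toeplitz (c : ℤ → ℝ) (n : ℕ) : Matrix (Fin n) (Fin n) ℝ :=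
  Matrix.of fun i j => c ((i : ℤ) - (j : ℤ))

namespace OrthogonalPolynomial

variable {c : ℤ → ℝ}

theorem even_of_posDef (hc : ∀ n, (toeplitz c n).PosDef) : Function.Even c := by
  intro k
  have h := congrFun (congrFun (hc (k.natAbs + 1)).isHermitian ⟨k.natAbs, by omega⟩) 0
  simp only [Matrix.conjTranspose_apply, toeplitz, Matrix.of_apply, star_trivial] at h
  rcases Int.natAbs_eq k with hk | hk
  · rw [hk]; simpa using h
  · rw [hk]; simpa using h.symm

variable (c) in
/-- `pairing c k p = ∑ⱼ pⱼ c (j - k)`: when `c` are the Fourier coefficients of a weight `w`,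
this is `⟨p, z^k⟩` in `L²(w dθ / 2π)`. -/
noncomputable def pairing (k : ℤ) : ℝ[X] →ₗ[ℝ] ℝ :=
  lsum fun j => LinearMap.mulRight ℝ (c (j - k))

theorem pairing_monomial (k : ℤ) (n : ℕ) (a : ℝ) :
    pairing c k (monomial n a) = a * c (n - k) := by
  rw [pairing, lsum_apply, sum_monomial_index _ _ (by simp), LinearMap.mulRight_apply]

theorem pairing_X_pow (k : ℤ) (n : ℕ) : pairing c k (X ^ n) = c (n - k) := by
  rw [← monomial_one_right_eq_X_pow, pairing_monomial, one_mul]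

theorem pairing_C_mul_X_pow (k : ℤ) (n : ℕ) (a : ℝ) :
    pairing c k (C a * X ^ n) = a * c (n - k) := by
  rw [C_mul_X_pow_eq_monomial, pairing_monomial]

theorem pairing_X_mul (k : ℤ) (p : ℝ[X]) : pairing c k (X * p) = pairing c (k - 1) p := by
  induction p using Polynomial.induction_on' with
  | add p q hp hq => simp only [mul_add, map_add, hp, hq]
  | monomial n a =>
    rw [X_mul_monomial, pairing_monomial, pairing_monomial]
    congr 2
    push_cast
    ring

theorem pairing_eq_sum (k : ℤ) {p : ℝ[X]} {N : ℕ} (hp : p.degree < N) :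
    pairing c k p = ∑ j ∈ Finset.range N, p.coeff j * c (j - k) := by
  rw [pairing, lsum_apply, sum_def]
  refine Finset.sum_subset (fun j hj => ?_) fun j _ hj => ?_
  · by_contra hjN
    exact mem_support_iff.mp hj ((degree_lt_iff_coeff_zero p N).mp hp j
      (not_lt.mp (Finset.mem_range.not.mp hjN)))
  · simp [notMem_support_iff.mp hj]

theorem pairing_reflect (heven : Function.Even c) (k : ℤ) {p : ℝ[X]} {N : ℕ}
    (hp : p.natDegree ≤ N) : pairing c k (reflect N p) = pairing c (N - k) p := by
  rw [pairing_eq_sum k (degree_lt_succ_of_natDegree_le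
      (natDegree_reflect_le.trans (max_le le_rfl hp))),
    pairing_eq_sum _ (degree_lt_succ_of_natDegree_le hp), ← Finset.sum_range_reflect]
  refine Finset.sum_congr rfl fun j hj => ?_
  have hj : j ≤ N := Nat.lt_succ_iff.mp (Finset.mem_range.mp hj)
  rw [coeff_reflect, revAt_le (by omega), ← heven]
  congr 2 <;> omega

theorem pairing_X_mul_derivative {t : ℝ} (hrec : ∀ k : ℤ, k * c k = t * (c (k - 1) - c (k + 1)))
    (k : ℤ) (p : ℝ[X]) : pairing c k (X * derivative p) =
      k * pairing c k p + t * (pairing c (k + 1) p - pairing c (k - 1) p) := by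
  induction p using Polynomial.induction_on' with
  | add p q hp hq => simp only [mul_add, map_add, hp, hq]; ring
  | monomial n a =>
    have hmon : X * derivative (monomial n a) = monomial n (n * a) := by
      ext j
      rw [coeff_X_mul_derivative, coeff_monomial, coeff_monomial]
      split_ifs with h
      · rw [h]
      · rw [mul_zero]
    have h := hrec (n - k)
    rw [show (n : ℤ) - k - 1 = n - (k + 1) by ring, show (n : ℤ) - k + 1 = n - (k - 1) by ring]
      at h
    push_cast at h
    rw [hmon, pairing_monomial, pairing_monomial, pairing_monomial, pairing_monomial]
    linear_combination a * h

theorem toeplitz_mulVec_coeff (heven : Function.Even c) {p : ℝ[X]} {N : ℕ}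
    (hp : p.degree < N) (i : Fin N) :
    (toeplitz c N *ᵥ fun j => p.coeff j) i = pairing c i p := by
  rw [pairing_eq_sum _ hp, ← Fin.sum_univ_eq_sum_range, Matrix.mulVec, dotProduct]
  refine Finset.sum_congr rfl fun j _ => ?_
  rw [toeplitz, Matrix.of_apply, ← heven, mul_comm]
  congr 2
  ring

theorem eq_zero_of_pairing_eq_zero (hc : ∀ n, (toeplitz c n).PosDef) {p : ℝ[X]} {N : ℕ}
    (hp : p.degree < N) (h : ∀ k : ℕ, k < N → pairing c k p = 0) : p = 0 := by
  have hv : (fun j : Fin N => p.coeff j) = 0 :=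
    Matrix.eq_zero_of_mulVec_eq_zero (hc N).det_pos.ne' <| funext fun i => by
      rw [toeplitz_mulVec_coeff (even_of_posDef hc) hp, h i i.isLt, Pi.zero_apply]
  ext j
  rw [coeff_zero]
  rcases lt_or_ge j N with hj | hj
  · exact congrFun hv ⟨j, hj⟩
  · exact (degree_lt_iff_coeff_zero p N).mp hp j hj

variable (c) in
noncomputable def yuleWalker (n : ℕ) : Fin n → ℝ :=
  (toeplitz c n)⁻¹ *ᵥ fun j => c ((j : ℤ) + 1)

variable (c) in
/-- The monic polynomial of degree `n` orthogonal to `1, …, z^{n-1}`. -/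
noncomputable def orthPoly (n : ℕ) : ℝ[X] :=
  X ^ n - ∑ j : Fin n, C (yuleWalker c n j.rev) * X ^ (j : ℕ)

theorem orthPoly_monic (n : ℕ) : (orthPoly c n).Monic :=
  monic_X_pow_sub (degree_sum_fin_lt _)

theorem natDegree_orthPoly (n : ℕ) : (orthPoly c n).natDegree = n := by
  apply natDegree_eq_of_degree_eq_some
  rw [orthPoly, degree_sub_eq_left_of_degree_lt (by rw [degree_X_pow]; exact degree_sum_fin_lt _),
    degree_X_pow]

theorem coeff_orthPoly_self (n : ℕ) : (orthPoly c n).coeff n = 1 := by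
  simpa [natDegree_orthPoly] using (orthPoly_monic (c := c) n).coeff_natDegree

theorem coeff_orthPoly_of_lt {n j : ℕ} (hj : j < n) :
    (orthPoly c n).coeff j = -yuleWalker c n (Fin.rev ⟨j, hj⟩) := by
  rw [orthPoly, coeff_sub, coeff_X_pow, if_neg hj.ne, finsetSum_coeff,
    Finset.sum_eq_single ⟨j, hj⟩]
  · simp
  · intro i _ hi
    rw [coeff_C_mul_X_pow, if_neg (fun h => hi (Fin.ext h.symm))]
  · simp

theorem natDegree_reflect_orthPoly_le (n : ℕ) : (reflect n (orthPoly c n)).natDegree ≤ n :=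
  natDegree_reflect_le.trans (max_le le_rfl (natDegree_orthPoly n).le)

theorem coeff_zero_reflect_orthPoly (n : ℕ) : (reflect n (orthPoly c n)).coeff 0 = 1 := by
  rw [coeff_reflect, revAt_le n.zero_le, Nat.sub_zero, coeff_orthPoly_self]

theorem pairing_orthPoly_of_lt (hc : ∀ n, (toeplitz c n).PosDef) {n : ℕ} (k : ℤ) (hk0 : 0 ≤ k)
    (hk : k < n) : pairing c k (orthPoly c n) = 0 := by
  lift k to ℕ using hk0
  have hrow := congrFun (show toeplitz c n *ᵥ yuleWalker c n = fun j : Fin n => c ((j : ℤ) + 1) by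
    rw [yuleWalker, Matrix.mulVec_mulVec, Matrix.mul_nonsing_inv _ (hc n).det_pos.ne'.isUnit,
      Matrix.one_mulVec]) ⟨n - 1 - k, by omega⟩
  rw [Matrix.mulVec, dotProduct] at hrow
  rw [orthPoly, map_sub, map_sum, pairing_X_pow, sub_eq_zero]
  simp only [pairing_C_mul_X_pow]
  rw [← Equiv.sum_comp Fin.revPerm, show c (n - k) = c (((n - 1 - k : ℕ) : ℤ) + 1) by
    congr 1; omega]
  rw [← hrow]
  refine Finset.sum_congr rfl fun i _ => ?_
  rw [Fin.revPerm_apply, Fin.rev_rev, toeplitz, Matrix.of_apply, mul_comm, Fin.val_rev]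
  congr 2
  dsimp only
  omega

theorem eq_orthPoly (hc : ∀ n, (toeplitz c n).PosDef) {n : ℕ} {p : ℝ[X]} (hp : p.natDegree ≤ n)
    (hlead : p.coeff n = 1) (horth : ∀ k : ℕ, k < n → pairing c k p = 0) :
    p = orthPoly c n := by
  rw [← sub_eq_zero]
  refine eq_zero_of_pairing_eq_zero hc (N := n) ?_ fun k hk => ?_
  · refine (degree_lt_iff_coeff_zero _ _).mpr fun j hj => ?_
    rw [coeff_sub]
    rcases hj.eq_or_lt with rfl | hj
    · rw [hlead, coeff_orthPoly_self, sub_self]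
    · rw [coeff_eq_zero_of_natDegree_lt (hp.trans_lt hj),
        coeff_eq_zero_of_natDegree_lt ((natDegree_orthPoly n).trans_lt hj), sub_zero]
  · rw [map_sub, horth k hk, pairing_orthPoly_of_lt hc k (by positivity) (by exact_mod_cast hk),
      sub_zero]

variable (c) in
noncomputable def orthPolyNorm (n : ℕ) : ℝ := pairing c n (orthPoly c n)

theorem orthPolyNorm_pos (hc : ∀ n, (toeplitz c n).PosDef) (n : ℕ) : 0 < orthPolyNorm c n := by
  have hv : (fun j : Fin (n + 1) => (orthPoly c n).coeff j) ≠ 0 := fun h => by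
    simpa [coeff_orthPoly_self] using congrFun h (Fin.last n)
  have hpos := (hc (n + 1)).dotProduct_mulVec_pos hv
  rw [star_trivial, dotProduct, Fin.sum_univ_castSucc] at hpos
  rw [orthPolyNorm]
  simpa [toeplitz_mulVec_coeff (even_of_posDef hc)
    (degree_lt_succ_of_natDegree_le (natDegree_orthPoly n).le), pairing_orthPoly_of_lt hc,
    coeff_orthPoly_self] using hpos

theorem orthPoly_succ_eq_X_mul_sub (hc : ∀ n, (toeplitz c n).PosDef) (n : ℕ) :
    orthPoly c (n + 1) = X * orthPoly c n -
      (pairing c (-1) (orthPoly c n) / orthPolyNorm c n) • reflect n (orthPoly c n) := by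
  symm
  apply eq_orthPoly hc
  · refine (natDegree_sub_le _ _).trans (max_le ?_ ((natDegree_smul_le _ _).trans
      ((natDegree_reflect_orthPoly_le n).trans n.le_succ)))
    exact natDegree_mul_le.trans (by rw [natDegree_X, natDegree_orthPoly, add_comm])
  · rw [coeff_sub, coeff_X_mul, coeff_orthPoly_self, coeff_smul,
      coeff_eq_zero_of_natDegree_lt ((natDegree_reflect_orthPoly_le n).trans_lt n.lt_succ_self),
      smul_zero, sub_zero]
  · intro k hk
    rw [map_sub, map_smul, pairing_X_mul,
      pairing_reflect (even_of_posDef hc) _ (natDegree_orthPoly n).le, smul_eq_mul]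
    rcases k with _ | k
    · rw [Nat.cast_zero, zero_sub, sub_zero, ← orthPolyNorm,
        div_mul_cancel₀ _ (orthPolyNorm_pos hc n).ne', sub_self]
    · rw [Nat.cast_succ, add_sub_cancel_right, pairing_orthPoly_of_lt hc k (by omega) (by omega),
        pairing_orthPoly_of_lt hc (n - (k + 1)) (by omega) (by omega), mul_zero, sub_zero]

variable (c) in
/-- `α_n = -Φ_n(0)`; in Simon's indexing of Verblunsky coefficients this is `α_{n-1}`. -/
noncomputable def verblunsky (n : ℕ) : ℝ := -(orthPoly c n).coeff 0

theorem verblunsky_succ (hc : ∀ n, (toeplitz c n).PosDef) (n : ℕ) :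
    verblunsky c (n + 1) = pairing c (-1) (orthPoly c n) / orthPolyNorm c n := by
  rw [verblunsky, orthPoly_succ_eq_X_mul_sub hc, coeff_sub, coeff_X_mul_zero, coeff_smul,
    coeff_zero_reflect_orthPoly, smul_eq_mul, mul_one, zero_sub, neg_neg]

theorem orthPoly_succ (hc : ∀ n, (toeplitz c n).PosDef) (n : ℕ) :
    orthPoly c (n + 1) = X * orthPoly c n - verblunsky c (n + 1) • reflect n (orthPoly c n) := by
  rw [verblunsky_succ hc]
  exact orthPoly_succ_eq_X_mul_sub hc n

theorem pairing_neg_one_orthPoly (hc : ∀ n, (toeplitz c n).PosDef) (n : ℕ) :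
    pairing c (-1) (orthPoly c n) = verblunsky c (n + 1) * orthPolyNorm c n := by
  rw [verblunsky_succ hc, div_mul_cancel₀ _ (orthPolyNorm_pos hc n).ne']

theorem orthPolyNorm_succ (hc : ∀ n, (toeplitz c n).PosDef) (n : ℕ) :
    orthPolyNorm c (n + 1) = orthPolyNorm c n * (1 - verblunsky c (n + 1) ^ 2) := by
  conv_lhs => rw [orthPolyNorm, orthPoly_succ hc]
  rw [map_sub, map_smul, pairing_X_mul,
    pairing_reflect (even_of_posDef hc) _ (natDegree_orthPoly n).le, smul_eq_mul, Nat.cast_succ,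
    add_sub_cancel_right, sub_add_cancel_left, ← orthPolyNorm, pairing_neg_one_orthPoly hc]
  ring

theorem freud_equation (hc : ∀ n, (toeplitz c n).PosDef) {t : ℝ}
    (hrec : ∀ k : ℤ, k * c k = t * (c (k - 1) - c (k + 1))) (n : ℕ) :
    ((n + 2 : ℕ) : ℝ) • orthPoly c (n + 2) - X * derivative (orthPoly c (n + 2)) =
      (-t * (1 - verblunsky c (n + 2) ^ 2)) • orthPoly c (n + 1) +
        (t * verblunsky c (n + 3) * (1 - verblunsky c (n + 2) ^ 2)) •
          reflect (n + 1) (orthPoly c (n + 1)) := by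
  have hnorm := orthPolyNorm_succ hc (n + 1)
  rw [← sub_eq_zero]
  refine eq_zero_of_pairing_eq_zero hc (N := n + 2) ?_ fun k hk => ?_
  · have hlhs := degree_natDegree_smul_sub_X_mul_derivative_lt (orthPoly c (n + 2))
    rw [natDegree_orthPoly] at hlhs
    refine (degree_sub_le _ _).trans_lt (max_lt hlhs ((degree_add_le _ _).trans_lt (max_lt ?_ ?_)))
    · exact (degree_smul_le _ _).trans_lt
        (degree_lt_succ_of_natDegree_le (natDegree_orthPoly _).le)
    · exact (degree_smul_le _ _).trans_lt
        (degree_lt_succ_of_natDegree_le (natDegree_reflect_orthPoly_le _))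
  rw [map_sub, map_add, map_sub, map_smul, map_smul, map_smul, pairing_X_mul_derivative hrec,
    pairing_reflect (even_of_posDef hc) _ (natDegree_orthPoly _).le, smul_eq_mul, smul_eq_mul,
    smul_eq_mul]
  obtain rfl | rfl | ⟨hk1, hkn⟩ : k = 0 ∨ k = n + 1 ∨ (1 ≤ k ∧ k ≤ n) := by omega
  · rw [Nat.cast_zero, zero_add, zero_sub, sub_zero, pairing_neg_one_orthPoly hc,
      pairing_orthPoly_of_lt hc 0 le_rfl (by omega),
      pairing_orthPoly_of_lt hc 1 (by omega) (by omega),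
      pairing_orthPoly_of_lt hc 0 le_rfl (by omega), ← orthPolyNorm, hnorm]
    ring
  · rw [show ((n + 1 : ℕ) : ℤ) + 1 = (n + 2 : ℕ) by push_cast; ring, ← orthPolyNorm,
      pairing_orthPoly_of_lt hc ((n + 1 : ℕ) : ℤ) (by omega) (by omega),
      pairing_orthPoly_of_lt hc (((n + 1 : ℕ) : ℤ) - 1) (by omega) (by omega), sub_self,
      pairing_orthPoly_of_lt hc 0 le_rfl (by omega), ← orthPolyNorm, hnorm]
    ring
  · rw [pairing_orthPoly_of_lt hc (n := n + 2) k (by omega) (by omega),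
      pairing_orthPoly_of_lt hc (n := n + 2) (k + 1) (by omega) (by omega),
      pairing_orthPoly_of_lt hc (n := n + 2) (k - 1) (by omega) (by omega),
      pairing_orthPoly_of_lt hc (n := n + 1) k (by omega) (by omega),
      pairing_orthPoly_of_lt hc (n := n + 1) ((n + 1 : ℕ) - k) (by omega) (by omega)]
    ring

theorem discrete_painleve (hc : ∀ n, (toeplitz c n).PosDef) {t : ℝ}
    (hrec : ∀ k : ℤ, k * c k = t * (c (k - 1) - c (k + 1))) (n : ℕ) :
    ((n + 2 : ℕ) : ℝ) * verblunsky c (n + 2) +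
      t * (1 - verblunsky c (n + 2) ^ 2) * (verblunsky c (n + 1) + verblunsky c (n + 3)) = 0 := by
  have h := congrArg (coeff · 0) (freud_equation hc hrec n)
  simp only [coeff_sub, coeff_add, coeff_smul, coeff_X_mul_zero, coeff_zero_reflect_orthPoly,
    smul_eq_mul] at h
  simp only [verblunsky] at h ⊢
  linear_combination -h

end OrthogonalPolynomial

open Real OrthogonalPolynomial

theorem even_fk (t : ℝ) : Function.Even (fk t) := by
  intro k
  simp [fk]

theorem fk_recurrence (t : ℝ) (k : ℤ) : k * fk t k = t * (fk t (k - 1) - fk t (k + 1)) := by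
  set F : ℤ → ℝ → ℝ := fun j θ => exp (2 * t * cos θ) * cos (j * θ) with hF
  have hderiv : ∀ θ, HasDerivAt (fun θ => exp (2 * t * cos θ) * sin (k * θ))
      (k * F k θ - t * F (k - 1) θ + t * F (k + 1) θ) θ := by
    intro θ
    refine ((((hasDerivAt_cos θ).const_mul (2 * t)).exp).mul
      (((hasDerivAt_id θ).const_mul (k : ℝ)).sin)).congr_deriv ?_
    simp only [hF, Int.cast_sub, Int.cast_add, Int.cast_one, sub_mul, add_mul, one_mul, cos_sub,
      cos_add, id]
    ring
  have hzero : ∫ θ in (0)..(2 * π), (k * F k θ - t * F (k - 1) θ + t * F (k + 1) θ) = 0 := by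
    rw [intervalIntegral.integral_eq_sub_of_hasDerivAt (fun θ _ => hderiv θ)
      (Continuous.intervalIntegrable (by fun_prop) _ _), sin_periodic.int_mul_eq k]
    simp
  rw [intervalIntegral.integral_add, intervalIntegral.integral_sub,
    intervalIntegral.integral_const_mul, intervalIntegral.integral_const_mul,
    intervalIntegral.integral_const_mul] at hzero
  · simp only [fk]
    linear_combination (1 / (2 * π)) * hzero
  all_goals exact Continuous.intervalIntegrable (by fun_prop) _ _

theorem sum_mul_sum_mul_cos_sub {ι : Type*} (s : Finset ι) (x a : ι → ℝ) :
    ∑ i ∈ s, ∑ j ∈ s, x i * x j * cos (a i - a j) =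
      (∑ i ∈ s, x i * cos (a i)) ^ 2 + (∑ i ∈ s, x i * sin (a i)) ^ 2 := by
  simp only [sq, Finset.sum_mul_sum, ← Finset.sum_add_distrib, cos_sub]
  exact Finset.sum_congr rfl fun i _ => Finset.sum_congr rfl fun j _ => by ring

theorem dotProduct_toeplitz_fk_mulVec (t : ℝ) {n : ℕ} (x : Fin n → ℝ) :
    x ⬝ᵥ (toeplitz (fk t) n *ᵥ x) = 1 / (2 * π) * ∫ θ in (0)..(2 * π), exp (2 * t * cos θ) *
      ((∑ j, x j * cos (j * θ)) ^ 2 + (∑ j, x j * sin (j * θ)) ^ 2) := by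
  have hexpand : ∀ θ, exp (2 * t * cos θ) *
      ((∑ j, x j * cos (j * θ)) ^ 2 + (∑ j, x j * sin (j * θ)) ^ 2) =
      ∑ i : Fin n, ∑ j : Fin n,
        x i * x j * (exp (2 * t * cos θ) * cos (((i : ℤ) - (j : ℤ) : ℤ) * θ)) := by
    intro θ
    rw [← sum_mul_sum_mul_cos_sub, Finset.mul_sum]
    refine Finset.sum_congr rfl fun i _ => ?_
    rw [Finset.mul_sum]
    refine Finset.sum_congr rfl fun j _ => ?_
    push_cast
    ring_nf
  simp_rw [hexpand]
  rw [intervalIntegral.integral_finsetSum fun i _ => ?_, Finset.mul_sum]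
  · refine Finset.sum_congr rfl fun i _ => ?_
    rw [intervalIntegral.integral_finsetSum fun j _ => ?_, Finset.mul_sum, Matrix.mulVec,
      dotProduct, Finset.mul_sum]
    · refine Finset.sum_congr rfl fun j _ => ?_
      rw [intervalIntegral.integral_const_mul, toeplitz, Matrix.of_apply, fk]
      ring
    · exact Continuous.intervalIntegrable (by fun_prop) _ _
  · exact Continuous.intervalIntegrable (by fun_prop) _ _

theorem exists_sum_sq_pos {n : ℕ} {x : Fin n → ℝ} (hx : x ≠ 0) : ∃ θ ∈ Set.Icc 0 (2 * π),
    0 < (∑ j, x j * cos (j * θ)) ^ 2 + (∑ j, x j * sin (j * θ)) ^ 2 := by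
  set p : ℂ[X] := ∑ j : Fin n, C (x j : ℂ) * X ^ (j : ℕ)
  have hp : p ≠ 0 := by
    obtain ⟨j, hj⟩ := Function.ne_iff.mp hx
    intro h
    apply hj
    simpa [p, finsetSum_coeff, coeff_C_mul_X_pow, Fin.val_inj] using congrArg (coeff · j) h
  have hnormSq : ∀ θ : ℝ, Complex.normSq (p.eval (Complex.exp (θ * Complex.I))) =
      (∑ j, x j * cos (j * θ)) ^ 2 + (∑ j, x j * sin (j * θ)) ^ 2 := by
    intro θ
    have hexp : ∀ j : ℕ,
        Complex.exp (j * (θ * Complex.I)) = Complex.exp ((j * θ : ℝ) * Complex.I) :=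
      fun j => by push_cast; ring_nf
    simp only [p, eval_finsetSum, eval_mul, eval_C, eval_pow, eval_X, ← Complex.exp_nat_mul,
      Complex.normSq_apply, Complex.re_sum, Complex.im_sum, Complex.re_ofReal_mul,
      Complex.im_ofReal_mul, hexp, Complex.exp_ofReal_mul_I_re, Complex.exp_ofReal_mul_I_im, sq]
  by_contra! h
  apply hp
  apply eq_zero_of_infinite_isRoot
  refine ((Set.Ico_infinite two_pi_pos).image (Subtype.val_injective.comp_injOn
    (Circle.exp_injOn_Ico (sub_zero (2 * π)).le))).mono ?_
  rintro _ ⟨θ, hθ, rfl⟩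
  change p.eval (Complex.exp (θ * Complex.I)) = 0
  rw [← Complex.normSq_eq_zero, hnormSq]
  exact le_antisymm (h θ (Set.Ico_subset_Icc_self hθ)) (by positivity)

theorem posDef_toeplitz_fk (t : ℝ) (n : ℕ) : (toeplitz (fk t) n).PosDef := by
  rw [Matrix.posDef_iff_dotProduct_mulVec]
  refine ⟨?_, fun x hx => ?_⟩
  · ext i j
    simp only [Matrix.conjTranspose_apply, toeplitz, Matrix.of_apply, star_trivial]
    rw [← even_fk, neg_sub]
  · rw [star_trivial, dotProduct_toeplitz_fk_mulVec]
    obtain ⟨θ, hθ, hpos⟩ := exists_sum_sq_pos hx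
    exact mul_pos (by positivity) (intervalIntegral.integral_pos two_pi_pos
      (Continuous.continuousOn (by fun_prop)) (fun _ _ => by positivity) ⟨θ, hθ, by positivity⟩)

theorem Un_eq_verblunsky (t : ℝ) {n : ℕ} (hn : 1 ≤ n) : Un n t = verblunsky (fk t) n := by
  obtain ⟨m, rfl⟩ : ∃ m, n = m + 1 := ⟨n - 1, by omega⟩
  rw [verblunsky, coeff_orthPoly_of_lt m.succ_pos, neg_neg, Un, dotProduct,
    Finset.sum_eq_single (Fin.last m)]
  · rw [show deltaMinus (m + 1) (Fin.last m) = 1 by simp [deltaMinus], mul_one]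
    rfl
  · intro j _ hj
    rw [deltaMinus, if_neg fun h => hj (Fin.ext (by simpa using h)), mul_zero]
  · simp

/-- Discrete Painlevé II recurrence: (n/t)·U_n + (1 − U_n²)·(U_{n−1} + U_{n+1}) = 0. -/
theorem discrete_painleve_II (n : ℕ) (hn : 2 ≤ n) (t : ℝ) (ht : 0 < t) :
    ((n : ℝ) / t) * Un n t + (1 - (Un n t) ^ 2) * (Un (n - 1) t + Un (n + 1) t) = 0 := by
  obtain ⟨m, rfl⟩ : ∃ m, n = m + 2 := ⟨n - 2, by omega⟩
  have h := discrete_painleve (posDef_toeplitz_fk t) (fk_recurrence t) m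
  rw [show m + 2 - 1 = m + 1 by omega, Un_eq_verblunsky t (by omega : 1 ≤ m + 2),
    Un_eq_verblunsky t (by omega : 1 ≤ m + 1), Un_eq_verblunsky t (by omega : 1 ≤ m + 2 + 1)]
  field_simp
  linear_combination h
end

section
/- (Monotonicity lemma) For every integer n ≥ 1 and every integer N ≥ 0, writing k = ⌊N/2⌋, one has b_{N+2,n} ≤ (2k+2)·b_{N,n}; equivalently, the probabilities F_N(n) = b_{N,n}/(2^k k!) that a uniformly chosen odd permutation in O_N has no increasing subsequence of length greater than n satisfy F_{N+2}(n) ≤ F_N(n). -/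
/-- The domain on which odd permutations act: for N = 2k the set {−k,…,−1,1,…,k},
for N = 2k+1 the set {−k,…,k}. -/
noncomputable def domZ (N : ℕ) : Finset ℤ :=
  if N % 2 = 0 then (Finset.Icc (-((N / 2 : ℕ) : ℤ)) ((N / 2 : ℕ) : ℤ)).erase 0
  else Finset.Icc (-((N / 2 : ℕ) : ℤ)) ((N / 2 : ℕ) : ℤ)

/-- σ is an odd permutation of the N-point domain: it fixes everything outside the
domain and satisfies σ(−m) = −σ(m). -/
def IsOddPerm (N : ℕ) (σ : Equiv.Perm ℤ) : Prop :=
  (∀ x : ℤ, x ∉ domZ N → σ x = x) ∧ ∀ x : ℤ, σ (-x) = -σ x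

/-- σ has no increasing subsequence (within the N-point domain) of length greater than n. -/
def LisLE (N n : ℕ) (σ : Equiv.Perm ℤ) : Prop :=
  ∀ s : Finset ℤ, s ⊆ domZ N → (∀ i ∈ s, ∀ j ∈ s, i < j → σ i < σ j) → s.card ≤ n

/-- b_{Nn}: the number of odd permutations of the N-point domain with no increasing
subsequence of length greater than n. -/
noncomputable def bN (N n : ℕ) : ℕ :=
  Nat.card {σ : Equiv.Perm ℤ // IsOddPerm N σ ∧ LisLE N n σ}

/-!
Let `k = ⌊N/2⌋`, so the `(N+2)`-point domain is the `N`-point domain together with `±(k+1)`.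
Given an odd permutation `σ` of the `(N+2)`-point domain, delete the points `±(k+1)` from its
domain and their images `±σ(k+1)` from its range, and close up the gaps order-preservingly.
The result `compress σ` is an odd permutation of the `N`-point domain, and every increasing
subsequence of it is an increasing subsequence of `σ`, so it still has `ℓ ≤ n`. Since `σ` is
recovered from `σ(k+1)` and `compress σ`, and `σ(k+1)` is one of the `2k+2` nonzero points of
its domain, `b_{N+2,n} ≤ (2k+2) b_{N,n}`; the bound on `F_N(n)` follows from
`2^(k+1) (k+1)! = (2k+2) 2^k k!`.
-/

section DomZ

variable {N : ℕ} {x : ℤ}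

lemma mem_domZ : x ∈ domZ N ↔ |x| ≤ (N / 2 : ℕ) ∧ (N % 2 = 0 → x ≠ 0) := by
  unfold domZ
  split_ifs with h
  · simp [abs_le, h, and_comm]
  · simp [abs_le, h]

lemma neg_mem_domZ : -x ∈ domZ N ↔ x ∈ domZ N := by
  rw [mem_domZ, mem_domZ, abs_neg, neg_ne_zero]

lemma mem_domZ_add_two :
    x ∈ domZ (N + 2) ↔ |x| ≤ (N / 2 : ℕ) + 1 ∧ (N % 2 = 0 → x ≠ 0) := by
  rw [mem_domZ, show (N + 2) / 2 = N / 2 + 1 by omega, show (N + 2) % 2 = N % 2 by omega]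
  push_cast; rfl

lemma mem_domZ_add_two_of_mem (hx : x ∈ domZ N) : x ∈ domZ (N + 2) := by
  rw [mem_domZ] at hx
  rw [mem_domZ_add_two]
  omega

lemma mem_domZ_iff_abs_ne (hx : x ∈ domZ (N + 2)) :
    x ∈ domZ N ↔ |x| ≠ (N / 2 : ℕ) + 1 := by
  rw [mem_domZ_add_two] at hx
  rw [mem_domZ]
  omega

lemma card_erase_zero_domZ (N : ℕ) : ((domZ N).erase 0).card = 2 * (N / 2) := by
  have h0 : (0 : ℤ) ∈ Finset.Icc (-((N / 2 : ℕ) : ℤ)) ((N / 2 : ℕ) : ℤ) :=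
    Finset.mem_Icc.2 ⟨by omega, by omega⟩
  unfold domZ
  split_ifs
  · rw [Finset.erase_idem, Finset.card_erase_of_mem h0, Int.card_Icc]; omega
  · rw [Finset.card_erase_of_mem h0, Int.card_Icc]; omega

end DomZ

-- `squeeze M` maps `ℤ \ {M, -M}` order-isomorphically onto `ℤ`; `unsqueeze M` is its inverse.
def squeeze (M x : ℤ) : ℤ := if M < x then x - 1 else if x < -M then x + 1 else x

def unsqueeze (M y : ℤ) : ℤ := if M ≤ y then y + 1 else if y ≤ -M then y - 1 else y

section Squeeze

variable {N : ℕ} {M x y : ℤ}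

lemma unsqueeze_squeeze (hM : 0 < M) (hx : |x| ≠ M) : unsqueeze M (squeeze M x) = x := by
  rw [ne_eq, abs_eq hM.le] at hx
  unfold squeeze unsqueeze; split_ifs <;> omega

lemma squeeze_unsqueeze : squeeze M (unsqueeze M y) = y := by
  unfold squeeze unsqueeze; split_ifs <;> omega

lemma abs_unsqueeze_ne (hM : 0 < M) : |unsqueeze M y| ≠ M := by
  rw [ne_eq, abs_eq hM.le]
  unfold unsqueeze; split_ifs <;> omega

lemma lt_of_squeeze_lt_squeeze (hM : 0 ≤ M) (h : squeeze M x < squeeze M y) : x < y := by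
  unfold squeeze at h; split_ifs at h <;> omega

lemma squeeze_neg (hM : 0 ≤ M) : squeeze M (-x) = -squeeze M x := by
  unfold squeeze; split_ifs <;> omega

lemma squeeze_mem_domZ (hM : 0 < M) (hMN : M ≤ (N / 2 : ℕ) + 1) (hx : x ∈ domZ (N + 2))
    (hxM : |x| ≠ M) : squeeze M x ∈ domZ N := by
  rw [mem_domZ_add_two, abs_le] at hx
  rw [ne_eq, abs_eq hM.le] at hxM
  rw [mem_domZ, abs_le]
  unfold squeeze; split_ifs <;> omega

lemma unsqueeze_mem_domZ (hM : 0 < M) (hy : y ∈ domZ N) : unsqueeze M y ∈ domZ (N + 2) := by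
  rw [mem_domZ, abs_le] at hy
  rw [mem_domZ_add_two, abs_le]
  unfold unsqueeze; split_ifs <;> omega

end Squeeze

namespace IsOddPerm

variable {N : ℕ} {σ : Equiv.Perm ℤ}

lemma apply_mem (hσ : IsOddPerm N σ) {x : ℤ} (hx : x ∈ domZ N) : σ x ∈ domZ N := by
  by_contra h
  rw [← σ.injective (hσ.1 _ h)] at hx
  exact h hx

lemma inv (hσ : IsOddPerm N σ) : IsOddPerm N σ⁻¹ := by
  refine ⟨fun x hx => ?_, fun x => ?_⟩
  · rw [Equiv.Perm.inv_eq_iff_eq, hσ.1 x hx]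
  · rw [Equiv.Perm.inv_eq_iff_eq, hσ.2, Equiv.Perm.coe_inv, Equiv.apply_symm_apply]

lemma apply_zero (hσ : IsOddPerm N σ) : σ 0 = 0 := by
  have := hσ.2 0
  rw [neg_zero] at this
  omega

lemma abs_apply_eq_abs_apply_iff (hσ : IsOddPerm N σ) {x y : ℤ} :
    |σ x| = |σ y| ↔ |x| = |y| := by
  simp only [abs_eq_abs, ← hσ.2, σ.injective.eq_iff]

lemma abs_apply_pos (hσ : IsOddPerm N σ) {x : ℤ} (hx : x ≠ 0) : 0 < |σ x| := by
  rw [abs_pos, ← hσ.apply_zero, σ.injective.ne_iff]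
  exact hx

lemma abs_apply_le (hσ : IsOddPerm N σ) {x : ℤ} (hx : x ∈ domZ N) : |σ x| ≤ (N / 2 : ℕ) :=
  (mem_domZ.1 (hσ.apply_mem hx)).1

end IsOddPerm

lemma finite_isOddPerm (N : ℕ) : {σ : Equiv.Perm ℤ | IsOddPerm N σ}.Finite := by
  have : Finite {σ : Equiv.Perm ℤ | ∀ x, x ∉ domZ N → σ x = x} :=
    .of_equiv _ (Equiv.Perm.subtypeEquivSubtypePerm (· ∈ domZ N))
  exact (Set.finite_coe_iff.1 this).subset fun _ hσ => hσ.1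

section Compress

variable {N n : ℕ} {σ : Equiv.Perm ℤ}

-- `K = k + 1`: the top point of the `(N+2)`-point domain, whose points `±K` are the new ones.
local notation "K" => ((N / 2 : ℕ) : ℤ) + 1

lemma IsOddPerm.mem_domZ_iff_abs_apply_ne (hσ : IsOddPerm (N + 2) σ) {x : ℤ}
    (hx : x ∈ domZ (N + 2)) : x ∈ domZ N ↔ |σ x| ≠ |σ K| := by
  rw [mem_domZ_iff_abs_ne hx, ne_eq, ne_eq, hσ.abs_apply_eq_abs_apply_iff,
    abs_of_pos (a := K) (by omega)]

lemma top_mem_domZ_add_two : K ∈ domZ (N + 2) := by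
  rw [mem_domZ_add_two, abs_of_pos (by omega)]
  omega

lemma IsOddPerm.abs_apply_ne_abs_apply_top (hσ : IsOddPerm (N + 2) σ) {x : ℤ}
    (hx : x ∈ domZ N) : |σ x| ≠ |σ K| :=
  (hσ.mem_domZ_iff_abs_apply_ne (mem_domZ_add_two_of_mem hx)).1 hx

lemma IsOddPerm.abs_apply_top_pos (hσ : IsOddPerm (N + 2) σ) : 0 < |σ K| :=
  hσ.abs_apply_pos (by omega)

lemma IsOddPerm.abs_apply_top_le (hσ : IsOddPerm (N + 2) σ) : |σ K| ≤ K := by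
  have := hσ.abs_apply_le top_mem_domZ_add_two
  omega

lemma IsOddPerm.squeeze_apply_mem (hσ : IsOddPerm (N + 2) σ) {x : ℤ} (hx : x ∈ domZ N) :
    squeeze |σ K| (σ x) ∈ domZ N :=
  squeeze_mem_domZ hσ.abs_apply_top_pos hσ.abs_apply_top_le
    (hσ.apply_mem (mem_domZ_add_two_of_mem hx)) (hσ.abs_apply_ne_abs_apply_top hx)

lemma IsOddPerm.inv_unsqueeze_mem (hσ : IsOddPerm (N + 2) σ) {y : ℤ} (hy : y ∈ domZ N) :
    σ⁻¹ (unsqueeze |σ K| y) ∈ domZ N := by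
  have hM := hσ.abs_apply_top_pos
  have hmem := hσ.inv.apply_mem (unsqueeze_mem_domZ hM hy)
  rw [hσ.mem_domZ_iff_abs_apply_ne hmem, Equiv.Perm.coe_inv, Equiv.apply_symm_apply]
  exact abs_unsqueeze_ne hM

noncomputable def compress (hσ : IsOddPerm (N + 2) σ) : Equiv.Perm ℤ where
  toFun x := if x ∈ domZ N then squeeze |σ K| (σ x) else x
  invFun y := if y ∈ domZ N then σ⁻¹ (unsqueeze |σ K| y) else y
  left_inv x := by
    by_cases hx : x ∈ domZ N
    · simp only [if_pos hx, if_pos (hσ.squeeze_apply_mem hx), unsqueeze_squeeze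
        hσ.abs_apply_top_pos (hσ.abs_apply_ne_abs_apply_top hx), Equiv.Perm.coe_inv,
        Equiv.symm_apply_apply]
    · simp only [if_neg hx]
  right_inv y := by
    by_cases hy : y ∈ domZ N
    · dsimp only
      rw [if_pos hy, if_pos (hσ.inv_unsqueeze_mem hy), Equiv.Perm.coe_inv,
        Equiv.apply_symm_apply, squeeze_unsqueeze]
    · simp only [if_neg hy]

lemma compress_apply (hσ : IsOddPerm (N + 2) σ) {x : ℤ} (hx : x ∈ domZ N) :
    compress hσ x = squeeze |σ K| (σ x) :=
  if_pos hx

lemma compress_apply_of_notMem (hσ : IsOddPerm (N + 2) σ) {x : ℤ} (hx : x ∉ domZ N) :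
    compress hσ x = x :=
  if_neg hx

lemma unsqueeze_compress_apply (hσ : IsOddPerm (N + 2) σ) {x : ℤ} (hx : x ∈ domZ N) :
    unsqueeze |σ K| (compress hσ x) = σ x := by
  rw [compress_apply hσ hx,
    unsqueeze_squeeze hσ.abs_apply_top_pos (hσ.abs_apply_ne_abs_apply_top hx)]

lemma isOddPerm_compress (hσ : IsOddPerm (N + 2) σ) : IsOddPerm N (compress hσ) := by
  refine ⟨fun x hx => compress_apply_of_notMem hσ hx, fun x => ?_⟩
  by_cases hx : x ∈ domZ N
  · have hnx : -x ∈ domZ N := neg_mem_domZ.2 hx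
    rw [compress_apply hσ hnx, compress_apply hσ hx, hσ.2, squeeze_neg (abs_nonneg _)]
  · have hnx : -x ∉ domZ N := mt neg_mem_domZ.1 hx
    rw [compress_apply_of_notMem hσ hnx, compress_apply_of_notMem hσ hx]

lemma LisLE.compress (hσ : IsOddPerm (N + 2) σ) (hlis : LisLE (N + 2) n σ) :
    LisLE N n (compress hσ) := by
  refine fun s hs hinc => hlis s (fun x hx => mem_domZ_add_two_of_mem (hs hx)) ?_
  intro i hi j hj hij
  have h := hinc i hi j hj hij
  rw [compress_apply hσ (hs hi), compress_apply hσ (hs hj)] at h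
  exact lt_of_squeeze_lt_squeeze (abs_nonneg _) h

lemma eq_of_compress_eq {σ τ : Equiv.Perm ℤ} (hσ : IsOddPerm (N + 2) σ)
    (hτ : IsOddPerm (N + 2) τ) (htop : σ K = τ K) (h : compress hσ = compress hτ) : σ = τ := by
  ext x
  by_cases hx : x ∈ domZ N
  · rw [← unsqueeze_compress_apply hσ hx, ← unsqueeze_compress_apply hτ hx, h, htop]
  by_cases hx' : x ∈ domZ (N + 2)
  · rw [mem_domZ_iff_abs_ne hx', not_not, abs_eq (by omega)] at hx
    rcases hx with rfl | rfl
    · exact htop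
    · rw [hσ.2, hτ.2, htop]
  · rw [hσ.1 x hx', hτ.1 x hx']

end Compress

theorem bN_add_two_le (N n : ℕ) : bN (N + 2) n ≤ (2 * (N / 2) + 2) * bN N n := by
  have : Finite {σ // IsOddPerm N σ ∧ LisLE N n σ} :=
    ((finite_isOddPerm N).subset fun _ hσ => hσ.1).to_subtype
  calc bN (N + 2) n
      ≤ Nat.card ((domZ (N + 2)).erase 0 × {σ // IsOddPerm N σ ∧ LisLE N n σ}) :=
        Nat.card_le_card_of_injective
          (fun σ => (⟨σ.1 ((N / 2 : ℕ) + 1), Finset.mem_erase.2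
              ⟨abs_pos.1 σ.2.1.abs_apply_top_pos, σ.2.1.apply_mem top_mem_domZ_add_two⟩⟩,
            ⟨compress σ.2.1, isOddPerm_compress σ.2.1, σ.2.2.compress σ.2.1⟩))
          fun σ τ h => Subtype.ext (eq_of_compress_eq σ.2.1 τ.2.1
            (congrArg (fun p => p.1.1) h) (congrArg (fun p => p.2.1) h))
    _ = (2 * (N / 2) + 2) * bN N n := by
        rw [Nat.card_prod, Nat.card_eq_finsetCard, card_erase_zero_domZ, bN]
        congr 1
        omega

theorem bN_monotonicity_general (n N : ℕ) :
    bN (N + 2) n ≤ (2 * (N / 2) + 2) * bN N n ∧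
    (bN (N + 2) n : ℝ) / (2 ^ ((N + 2) / 2) * (((N + 2) / 2).factorial : ℝ)) ≤
      (bN N n : ℝ) / (2 ^ (N / 2) * ((N / 2).factorial : ℝ)) := by
  have hb := bN_add_two_le N n
  refine ⟨hb, ?_⟩
  have hb' : (bN (N + 2) n : ℝ) ≤ (2 * (N / 2 : ℕ) + 2) * bN N n := by exact_mod_cast hb
  have hD : (0 : ℝ) < 2 ^ (N / 2) * (N / 2).factorial := by positivity
  rw [show (N + 2) / 2 = N / 2 + 1 by omega, pow_succ, Nat.factorial_succ,
    div_le_div_iff₀ (by positivity) hD]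
  push_cast
  nlinarith [mul_le_mul_of_nonneg_right hb' hD.le]

/-- Monotonicity lemma: b_{N+2,n} ≤ (2k+2)·b_{N,n} with k = ⌊N/2⌋; equivalently the
probabilities F_N(n) = b_{N,n}/(2^k k!) satisfy F_{N+2}(n) ≤ F_N(n). -/
theorem bN_monotonicity (n N : ℕ) (hn : 1 ≤ n) :
    bN (N + 2) n ≤ (2 * (N / 2) + 2) * bN N n ∧
    (bN (N + 2) n : ℝ) / (2 ^ ((N + 2) / 2) * (((N + 2) / 2).factorial : ℝ)) ≤
      (bN N n : ℝ) / (2 ^ (N / 2) * ((N / 2).factorial : ℝ)) :=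
  bN_monotonicity_general n N
end
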